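/- Let g be the 4-dimensional nilpotent real Lie algebra with basis e_1,…,e_4 and nonzero brackets [e_1,e_2] = −e_3 and [e_1,e_3] = −e_4, and let K be the endomorphism equal to +id on the subspace g⁺ := span(e_1, e_4 − e_2) and −id on the subspace g⁻ := span(e_2, e_3). Then: (i) this almost linear D-complex structure is not integrable, since [e_1, e_4 − e_2] = e_3 ∉ g⁺; (ii) K is not linear C∞-pure at the 2nd stage: the K-invariant form e^1∧e^4 and the K-anti-invariant form e^1∧(e^2 + e^4) = e^1∧e^4 + d(e^3) are both d-closed and define the same nonzero class, so 0 ≠ [e^1∧e^4] ∈ H^{2+}_K(g;ℝ) ∩ H^{2−}_K(g;ℝ). -/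

import Mathlib

/-!
In the basis dual to `e` the structure equations read `de¹ = de² = 0`, `de³ = e¹∧e²`,
`de⁴ = e¹∧e³`. Hence `e¹∧e⁴` and `e¹∧e²` are closed and `e¹∧e²` is exact, so `e¹∧e⁴` and
`e¹∧(e²+e⁴)` are cohomologous. The covectors `e¹, e⁴` vanish on `g⁻` and `e² + e⁴` vanishes on
`g⁺`, which makes the first form `K`-invariant and the second `K`-anti-invariant. The class is
nonzero because every exact 2-form `dβ = -β ∘ [·,·]` vanishes on the commuting pair `(e₁, e₄)`,
while `e¹∧e⁴` does not.
-/

open scoped BigOperators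

noncomputable section ChevalleyEilenberg

variable (g : Type*) [LieRing g] [LieAlgebra ℝ g]

/-- The Chevalley–Eilenberg differential of an alternating `k`-form on a real Lie
algebra, as a function on `(k+1)`-tuples:
`(dα)(x_0,…,x_k) = Σ_{i<j} (−1)^{i+j} α([x_i,x_j], x_0,…,x̂_i,…,x̂_j,…,x_k)`. -/
def ceD : {k : ℕ} → AlternatingMap ℝ g ℝ (Fin k) → ((Fin (k + 1) → g) → ℝ)
  | 0, _ => 0
  | (k + 1), α => fun x =>
      ∑ i : Fin (k + 2), ∑ j : Fin (k + 2),
        if hij : (i : ℕ) < (j : ℕ) then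
          (-1 : ℝ) ^ ((i : ℕ) + (j : ℕ)) *
            α (fun m : Fin (k + 1) =>
                if hm : (m : ℕ) = 0 then ⁅x i, x j⁆
                else
                  x (j.succAbove
                      ((⟨(i : ℕ), by omega⟩ : Fin (k + 1)).succAbove
                        (⟨(m : ℕ) - 1, by omega⟩ : Fin k))))
        else 0

theorem ceD_zero {k : ℕ} : ceD g (0 : AlternatingMap ℝ g ℝ (Fin k)) = 0 := by
  cases k with
  | zero => rfl
  | succ k => funext x; simp [ceD]

theorem ceD_add {k : ℕ} (α β : AlternatingMap ℝ g ℝ (Fin k)) :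
    ceD g (α + β) = ceD g α + ceD g β := by
  cases k with
  | zero => funext x; simp [ceD]
  | succ k =>
    funext x
    simp only [ceD, Pi.add_apply, AlternatingMap.add_apply]
    rw [← Finset.sum_add_distrib]
    refine Finset.sum_congr rfl fun i _ => ?_
    rw [← Finset.sum_add_distrib]
    refine Finset.sum_congr rfl fun j _ => ?_
    split
    · ring
    · ring

theorem ceD_smul {k : ℕ} (c : ℝ) (α : AlternatingMap ℝ g ℝ (Fin k)) :
    ceD g (c • α) = c • ceD g α := by
  cases k with
  | zero => funext x; simp [ceD]
  | succ k =>
    funext x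
    simp only [ceD, Pi.smul_apply, AlternatingMap.smul_apply, smul_eq_mul,
      Finset.mul_sum]
    refine Finset.sum_congr rfl fun i _ => ?_
    refine Finset.sum_congr rfl fun j _ => ?_
    split
    · ring
    · ring

/-- The space of `d`-closed `k`-forms. -/
def Zsub (k : ℕ) : Submodule ℝ (AlternatingMap ℝ g ℝ (Fin k)) where
  carrier := {α | ceD g α = 0}
  add_mem' := by
    intro a b ha hb
    simp only [Set.mem_setOf_eq] at *
    rw [ceD_add, ha, hb, add_zero]
  zero_mem' := by
    simpa only [Set.mem_setOf_eq] using ceD_zero g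
  smul_mem' := by
    intro c a ha
    simp only [Set.mem_setOf_eq] at *
    rw [ceD_smul, ha, smul_zero]

/-- The space of `d`-exact `k`-forms. -/
def Bsub : (k : ℕ) → Submodule ℝ (AlternatingMap ℝ g ℝ (Fin k))
  | 0 => ⊥
  | (k + 1) =>
    { carrier := {α | ∃ β : AlternatingMap ℝ g ℝ (Fin k), ceD g β = ⇑α}
      add_mem' := by
        rintro a b ⟨βa, hβa⟩ ⟨βb, hβb⟩
        exact ⟨βa + βb, by rw [ceD_add, hβa, hβb]; ext x; simp⟩
      zero_mem' := ⟨0, by rw [ceD_zero]; ext x; simp⟩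
      smul_mem' := by
        rintro c a ⟨β, hβ⟩
        exact ⟨c • β, by rw [ceD_smul, hβ]; rfl⟩ }

/-- The `k`-th Lie algebra cohomology `H^k(g;ℝ) = ker d / im d`. -/
abbrev Hcoh (k : ℕ) : Type _ :=
  @HasQuotient.Quotient (Zsub g k) (Submodule ℝ (Zsub g k))
    (Submodule.hasQuotient (R := ℝ) (M := Zsub g k)) ((Bsub g k).comap (Zsub g k).subtype)

/-- The cohomology class of a `d`-closed `k`-form. -/
def cls {k : ℕ} (α : AlternatingMap ℝ g ℝ (Fin k)) (hα : ceD g α = 0) : Hcoh g k :=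
  Submodule.Quotient.mk (⟨α, hα⟩ : Zsub g k)

/-- The subgroup `H^{k+}_K(g;ℝ)` of classes admitting a `d`-closed `K`-invariant
representative.  (The set of such classes is a linear subspace, so taking its span
does not enlarge it.) -/
def Hplus (K : g →ₗ[ℝ] g) (k : ℕ) : Submodule ℝ (Hcoh g k) :=
  Submodule.span ℝ
    {c | ∃ (α : AlternatingMap ℝ g ℝ (Fin k)) (hα : ceD g α = 0),
        α.compLinearMap K = α ∧ c = cls g α hα}

/-- The subgroup `H^{k−}_K(g;ℝ)` of classes admitting a `d`-closed
`K`-anti-invariant representative. -/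
def Hminus (K : g →ₗ[ℝ] g) (k : ℕ) : Submodule ℝ (Hcoh g k) :=
  Submodule.span ℝ
    {c | ∃ (α : AlternatingMap ℝ g ℝ (Fin k)) (hα : ceD g α = 0),
        α.compLinearMap K = -α ∧ c = cls g α hα}

/-- The wedge product of `k` linear functionals, as an alternating `k`-form. -/
def wedge {k : ℕ} (fs : Fin k → (g →ₗ[ℝ] ℝ)) :
    AlternatingMap ℝ g ℝ (Fin k) :=
  MultilinearMap.alternatization
    ((MultilinearMap.mkPiAlgebra ℝ (Fin k) ℝ).compLinearMap fs)

end ChevalleyEilenberg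

noncomputable section

section Stmt11

variable (g : Type*) [LieRing g] [LieAlgebra ℝ g] (e : Module.Basis (Fin 4) ℝ g)

/-- `g⁺ = span(e_1, e_4 − e_2)` (0-indexed: `e 0, e 3 - e 1`). -/
def gP : Submodule ℝ g := Submodule.span ℝ {e 0, e 3 - e 1}

/-- `g⁻ = span(e_2, e_3)` (0-indexed: `e 1, e 2`). -/
def gM : Submodule ℝ g := Submodule.span ℝ {e 1, e 2}

/-- `e^1∧e^4`. -/
def a14 : AlternatingMap ℝ g ℝ (Fin 2) := wedge g ![e.coord 0, e.coord 3]

/-- `e^1∧e^2`. -/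
def a12 : AlternatingMap ℝ g ℝ (Fin 2) := wedge g ![e.coord 0, e.coord 1]

variable {g}

section LinearAlgebra

variable {R V W : Type*} [Ring R] [AddCommGroup V] [Module R V] [AddCommGroup W] [Module R W]
  {P M : Submodule R V} {K : V →ₗ[R] V} {f : V →ₗ[R] W}

theorem comp_eq_self_of_le_ker (hPM : Codisjoint P M) (hKP : ∀ x ∈ P, K x = x)
    (hKM : ∀ x ∈ M, K x = -x) (hf : M ≤ LinearMap.ker f) : f ∘ₗ K = f := by
  ext v
  obtain ⟨p, hp, m, hm, rfl⟩ := Submodule.mem_sup.1 (hPM.eq_top ▸ Submodule.mem_top (x := v))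
  simp [hKP p hp, hKM m hm, LinearMap.mem_ker.1 (hf hm)]

theorem comp_eq_neg_of_le_ker (hPM : Codisjoint P M) (hKP : ∀ x ∈ P, K x = x)
    (hKM : ∀ x ∈ M, K x = -x) (hf : P ≤ LinearMap.ker f) : f ∘ₗ K = -f := by
  ext v
  obtain ⟨p, hp, m, hm, rfl⟩ := Submodule.mem_sup.1 (hPM.eq_top ▸ Submodule.mem_top (x := v))
  simp [hKP p hp, hKM m hm, LinearMap.mem_ker.1 (hf hp)]

end LinearAlgebra

section ChevalleyEilenbergLowDegree

theorem ceD_one_apply (β : AlternatingMap ℝ g ℝ (Fin 1)) (x : Fin 2 → g) :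
    ceD g β x = -β ![⁅x 0, x 1⁆] := by
  show (∑ i : Fin 2, ∑ j : Fin 2, _) = _
  simp [Fin.sum_univ_two, Matrix.cons_fin_one]

theorem ceD_two_apply (α : AlternatingMap ℝ g ℝ (Fin 2)) (x : Fin 3 → g) :
    ceD g α x = -α ![⁅x 0, x 1⁆, x 2] + α ![⁅x 0, x 2⁆, x 1] - α ![⁅x 1, x 2⁆, x 0] := by
  show (∑ i : Fin 3, ∑ j : Fin 3, _) = _
  simp only [Fin.sum_univ_three, Fin.val_zero, Fin.val_one, Fin.val_two, Nat.reduceLT,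
    ↓reduceDIte, add_zero, zero_add, Nat.reduceAdd, pow_one, neg_one_sq,
    Odd.neg_one_pow (by decide : Odd 3), one_mul, neg_mul, sub_eq_add_neg]
  congr 4 <;> funext m <;> fin_cases m <;> rfl

theorem wedge_one_apply (f : g →ₗ[ℝ] ℝ) (v : Fin 1 → g) : wedge g ![f] v = f (v 0) := by
  simp [wedge, MultilinearMap.alternatization_apply]

theorem wedge_two_apply (f h : g →ₗ[ℝ] ℝ) (v : Fin 2 → g) :
    wedge g ![f, h] v = f (v 0) * h (v 1) - f (v 1) * h (v 0) := by
  rw [wedge, MultilinearMap.alternatization_apply,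
    show (Finset.univ : Finset (Equiv.Perm (Fin 2))) = {1, Equiv.swap 0 1} by decide,
    Finset.sum_pair (by decide)]
  simp [sub_eq_add_neg]

theorem ceD_wedge_one_apply (f : g →ₗ[ℝ] ℝ) (x : Fin 2 → g) :
    ceD g (wedge g ![f]) x = -f ⁅x 0, x 1⁆ := by
  rw [ceD_one_apply, wedge_one_apply]
  rfl

/-- Here `df = 0` and `dh = -f ∧ k`, so by Leibniz `d(f ∧ h) = f ∧ f ∧ k = 0`. -/
theorem ceD_wedge_two_eq_zero {f h : g →ₗ[ℝ] ℝ} (k : g →ₗ[ℝ] ℝ)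
    (hf : ∀ x y : g, f ⁅x, y⁆ = 0) (hh : ∀ x y : g, h ⁅x, y⁆ = f x * k y - f y * k x) :
    ceD g (wedge g ![f, h]) = 0 := by
  funext x
  simp only [ceD_two_apply, wedge_two_apply, Matrix.cons_val_zero, Matrix.cons_val_one,
    Matrix.cons_val_fin_one, hf, hh, Pi.zero_apply]
  ring

theorem cls_eq_cls_iff {k : ℕ} {α β : AlternatingMap ℝ g ℝ (Fin k)} (hα : ceD g α = 0)
    (hβ : ceD g β = 0) : cls g α hα = cls g β hβ ↔ α - β ∈ Bsub g k :=
  Submodule.Quotient.eq _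

theorem cls_ne_zero_of_lie_eq_zero {α : AlternatingMap ℝ g ℝ (Fin 2)} (hα : ceD g α = 0)
    {x y : g} (hxy : ⁅x, y⁆ = 0) (hα_xy : α ![x, y] ≠ 0) : cls g α hα ≠ 0 := by
  intro h
  obtain ⟨β, hβ⟩ : (⟨α, hα⟩ : Zsub g 2) ∈ (Bsub g 2).comap (Zsub g 2).subtype :=
    (Submodule.Quotient.mk_eq_zero _).1 h
  have h0 : (![0] : Fin 1 → g) = 0 := by rw [← Matrix.zero_empty, Matrix.cons_zero_zero]
  exact hα_xy (by simpa [ceD_one_apply, hxy, h0] using (congrFun hβ ![x, y]).symm)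

end ChevalleyEilenbergLowDegree

def FiliformBrackets : Prop :=
  ∀ i j : Fin 4, i < j → ⁅e i, e j⁆ =
    (if i = 0 ∧ j = 1 then -e 2 else if i = 0 ∧ j = 2 then -e 3 else 0)

variable {e}

namespace FiliformBrackets

theorem lie_eq (hbr : FiliformBrackets e) (x y : g) :
    ⁅x, y⁆ = (e.coord 1 x * e.coord 0 y - e.coord 0 x * e.coord 1 y) • e 2 +
      (e.coord 2 x * e.coord 0 y - e.coord 0 x * e.coord 2 y) • e 3 := by
  have hbr' : ∀ i j, j < i → ⁅e i, e j⁆ =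
      -(if j = 0 ∧ i = 1 then -e 2 else if j = 0 ∧ i = 2 then -e 3 else 0) := fun i j hji => by
    rw [← lie_skew, hbr j i hji]
  unfold FiliformBrackets at hbr
  conv_lhs => rw [← e.sum_repr x, ← e.sum_repr y]
  simp only [Fin.sum_univ_four, lie_add, add_lie, lie_smul, smul_lie]
  simp only [lie_self, smul_zero, hbr, hbr', Fin.reduceLT, Fin.reduceEq, zero_lt_one, and_self,
    and_true, and_false, one_ne_zero, ↓reduceIte, neg_neg, neg_zero, smul_neg, smul_add, zero_add,
    add_zero, Module.Basis.coord_apply]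
  module

theorem coord_zero_lie (hbr : FiliformBrackets e) (x y : g) : e.coord 0 ⁅x, y⁆ = 0 := by
  simp [hbr.lie_eq]

theorem coord_one_lie (hbr : FiliformBrackets e) (x y : g) : e.coord 1 ⁅x, y⁆ = 0 := by
  simp [hbr.lie_eq]

theorem coord_two_lie (hbr : FiliformBrackets e) (x y : g) :
    e.coord 2 ⁅x, y⁆ = e.coord 1 x * e.coord 0 y - e.coord 0 x * e.coord 1 y := by
  simp [hbr.lie_eq]

theorem coord_three_lie (hbr : FiliformBrackets e) (x y : g) :
    e.coord 3 ⁅x, y⁆ = e.coord 2 x * e.coord 0 y - e.coord 0 x * e.coord 2 y := by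
  simp [hbr.lie_eq]

theorem lie_zero_three (hbr : FiliformBrackets e) : ⁅e 0, e 3⁆ = 0 := by
  simp [hbr.lie_eq]

theorem lie_zero_three_sub_one (hbr : FiliformBrackets e) : ⁅e 0, e 3 - e 1⁆ = e 2 := by
  simp [hbr.lie_eq]

end FiliformBrackets

theorem isCompl_gP_gM : IsCompl (gP g e) (gM g e) := by
  constructor
  · rw [Submodule.disjoint_def]
    intro x hxP hxM
    obtain ⟨a, b, rfl⟩ := Submodule.mem_span_pair.1 hxP
    obtain ⟨c, d, hx⟩ := Submodule.mem_span_pair.1 hxM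
    have ha : a = 0 := by simpa using (congrArg (e.coord 0) hx).symm
    have hb : b = 0 := by simpa using (congrArg (e.coord 3) hx).symm
    simp [ha, hb]
  · have he0 : e 0 ∈ gP g e := Submodule.subset_span (by simp)
    have he31 : e 3 - e 1 ∈ gP g e := Submodule.subset_span (by simp)
    have he1 : e 1 ∈ gM g e := Submodule.subset_span (by simp)
    have he2 : e 2 ∈ gM g e := Submodule.subset_span (by simp)
    rw [codisjoint_iff, eq_top_iff, ← e.span_eq, Submodule.span_le, Set.range_subset_iff]
    intro i
    fin_cases i
    · exact Submodule.mem_sup_left he0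
    · exact Submodule.mem_sup_right he1
    · exact Submodule.mem_sup_right he2
    · simpa using
        Submodule.add_mem _ (Submodule.mem_sup_left he31) (Submodule.mem_sup_right he1)

theorem e_two_notMem_gP : e 2 ∉ gP g e := by
  intro h
  obtain ⟨a, b, h⟩ := Submodule.mem_span_pair.1 h
  simpa using congrArg (e.coord 2) h

section AlmostProductStructure

variable {K : g →ₗ[ℝ] g}

theorem coord_zero_comp
    (hKp : ∀ x ∈ gP g e, K x = x) (hKq : ∀ x ∈ gM g e, K x = -x) :
    e.coord 0 ∘ₗ K = e.coord 0 :=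
  comp_eq_self_of_le_ker isCompl_gP_gM.codisjoint hKp hKq
    (Submodule.span_le.2 (by simp [Set.insert_subset_iff]))

theorem coord_three_comp
    (hKp : ∀ x ∈ gP g e, K x = x) (hKq : ∀ x ∈ gM g e, K x = -x) :
    e.coord 3 ∘ₗ K = e.coord 3 :=
  comp_eq_self_of_le_ker isCompl_gP_gM.codisjoint hKp hKq
    (Submodule.span_le.2 (by simp [Set.insert_subset_iff]))

theorem coord_one_add_coord_three_comp
    (hKp : ∀ x ∈ gP g e, K x = x) (hKq : ∀ x ∈ gM g e, K x = -x) :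
    (e.coord 1 + e.coord 3) ∘ₗ K = -(e.coord 1 + e.coord 3) :=
  comp_eq_neg_of_le_ker isCompl_gP_gM.codisjoint hKp hKq
    (Submodule.span_le.2 (by simp [Set.insert_subset_iff]))

theorem a14_compLinearMap
    (hKp : ∀ x ∈ gP g e, K x = x) (hKq : ∀ x ∈ gM g e, K x = -x) :
    (a14 g e).compLinearMap K = a14 g e := by
  ext v
  have h0 i := LinearMap.congr_fun (coord_zero_comp hKp hKq) (v i)
  have h3 i := LinearMap.congr_fun (coord_three_comp hKp hKq) (v i)
  simp only [LinearMap.comp_apply] at h0 h3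
  simp only [AlternatingMap.compLinearMap_apply, a14, wedge_two_apply, h0, h3]

theorem a14_add_a12_compLinearMap
    (hKp : ∀ x ∈ gP g e, K x = x) (hKq : ∀ x ∈ gM g e, K x = -x) :
    (a14 g e + a12 g e).compLinearMap K = -(a14 g e + a12 g e) := by
  ext v
  have h0 i := LinearMap.congr_fun (coord_zero_comp hKp hKq) (v i)
  have h13 i := LinearMap.congr_fun (coord_one_add_coord_three_comp hKp hKq) (v i)
  simp only [LinearMap.comp_apply, LinearMap.add_apply, LinearMap.neg_apply] at h0 h13
  simp only [AlternatingMap.compLinearMap_apply, AlternatingMap.add_apply,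
    AlternatingMap.neg_apply, a14, a12, wedge_two_apply, h0]
  linear_combination e.coord 0 (v 0) * h13 1 - e.coord 0 (v 1) * h13 0

end AlmostProductStructure

namespace FiliformBrackets

theorem ceD_a14 (hbr : FiliformBrackets e) : ceD g (a14 g e) = 0 :=
  ceD_wedge_two_eq_zero (-e.coord 2) hbr.coord_zero_lie fun x y => by
    rw [hbr.coord_three_lie]
    simp only [LinearMap.neg_apply]
    ring

theorem ceD_a12 (hbr : FiliformBrackets e) : ceD g (a12 g e) = 0 :=
  ceD_wedge_two_eq_zero 0 hbr.coord_zero_lie fun x y => by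
    simp [hbr.coord_one_lie]

theorem ceD_wedge_coord_two (hbr : FiliformBrackets e) :
    ceD g (wedge g ![e.coord 2]) = ⇑(a12 g e) := by
  funext x
  rw [ceD_wedge_one_apply, hbr.coord_two_lie, a12, wedge_two_apply]
  ring

theorem a14_sub_mem_Bsub (hbr : FiliformBrackets e) :
    a14 g e - (a14 g e + a12 g e) ∈ Bsub g 2 :=
  ⟨(-1 : ℝ) • wedge g ![e.coord 2], by
    rw [ceD_smul, hbr.ceD_wedge_coord_two, sub_add_cancel_left, neg_one_smul]
    rfl⟩

end FiliformBrackets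

variable (g e)

/-- On the 4-dimensional nilpotent Lie algebra with
`[e_1,e_2] = −e_3`, `[e_1,e_3] = −e_4`, the almost D-complex structure with
`g⁺ = span(e_1, e_4 − e_2)`, `g⁻ = span(e_2, e_3)` is not integrable
(`[e_1, e_4 − e_2] = e_3 ∉ g⁺`), and is not linear C∞-pure at the 2nd stage:
the `K`-invariant form `e^1∧e^4` and the `K`-anti-invariant form
`e^1∧(e^2+e^4) = e^1∧e^4 + d e^3` define the same nonzero class, so
`0 ≠ [e^1∧e^4] ∈ H^{2+}_K ∩ H^{2−}_K`. -/
theorem four_dim_almost_Dcomplex_not_pure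
    (hbr : ∀ i j : Fin 4, i < j → ⁅e i, e j⁆ =
      (if i = 0 ∧ j = 1 then -e 2 else if i = 0 ∧ j = 2 then -e 3 else 0))
    (K : g →ₗ[ℝ] g)
    (hKp : ∀ x ∈ gP g e, K x = x) (hKq : ∀ x ∈ gM g e, K x = -x) :
    IsCompl (gP g e) (gM g e) ∧
    ⁅e 0, e 3 - e 1⁆ = e 2 ∧
    e 2 ∉ gP g e ∧
    (a14 g e).compLinearMap K = a14 g e ∧
    (a14 g e + a12 g e).compLinearMap K = -(a14 g e + a12 g e) ∧
    ceD g (wedge g ![e.coord 2]) = ⇑(a12 g e) ∧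
    (∃ (h1 : ceD g (a14 g e) = 0) (h2 : ceD g (a14 g e + a12 g e) = 0),
      cls g (a14 g e) h1 = cls g (a14 g e + a12 g e) h2 ∧
      cls g (a14 g e) h1 ≠ 0 ∧
      cls g (a14 g e) h1 ∈ Hplus g K 2 ⊓ Hminus g K 2) := by
  replace hbr : FiliformBrackets e := hbr
  have hd14 := hbr.ceD_a14
  have hd : ceD g (a14 g e + a12 g e) = 0 := by rw [ceD_add, hd14, hbr.ceD_a12, add_zero]
  have hinv := a14_compLinearMap hKp hKq
  have hanti := a14_add_a12_compLinearMap hKp hKq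
  have hcls : cls g (a14 g e) hd14 = cls g _ hd :=
    (cls_eq_cls_iff hd14 hd).2 hbr.a14_sub_mem_Bsub
  have hne : cls g (a14 g e) hd14 ≠ 0 :=
    cls_ne_zero_of_lie_eq_zero hd14 hbr.lie_zero_three (by simp [a14, wedge_two_apply])
  exact ⟨isCompl_gP_gM, hbr.lie_zero_three_sub_one, e_two_notMem_gP, hinv, hanti,
    hbr.ceD_wedge_coord_two, hd14, hd, hcls, hne,
    ⟨Submodule.subset_span ⟨_, hd14, hinv, rfl⟩, Submodule.subset_span ⟨_, hd, hanti, hcls⟩⟩⟩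

end Stmt11

end
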